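/- arXiv:2310.04752 — 4 statements merged into one kernel-verified Lean document; each statement's English description precedes it below -/
import Mathlib

section
/- Let Z be a type, let G be a nonempty finite set of functions g : Z → ℝ, let C ≥ 1, and for each y ∈ {1,…,C} let N_y ≥ 1 and let z_y : {1,…,N_y} → Z be a sample from class y. Set N = Σ_y N_y and let S : {1,…,N} → Z be the concatenation of the samples z_1,…,z_C. Define the empirical Rademacher complexity of G on a sample w : {1,…,n} → Z as R(w) = 2^{-n} · Σ_{σ ∈ {−1,1}^n} max_{g ∈ G} (1/n) Σ_{i=1}^n σ_i · g(w_i). Then R(S) ≤ Σ_{y=1}^C (N_y/N) · R(z_y). -/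
/-!
For a fixed sign vector σ, the correlation of g with σ on the concatenated sample splits into
the per-class correlations weighted by `N y / N`, and a maximum of a sum is at most the sum of
the maxima. Averaging over σ then gives the claim, because the restriction of a uniform sign
vector on all `N` points to the block of class `y` is a uniform sign vector on `N y` points.
-/

open Finset

/-- The empirical Rademacher complexity of a nonempty finite class `G` of real-valued
functions on a sample `w : Fin n → Z`: the average over all sign vectors
`σ ∈ {-1, 1}^n` (encoded by `σ : Fin n → Bool`, `true ↦ 1`, `false ↦ -1`) of
`max_{g ∈ G} (1/n) ∑ i, σ i * g (w i)`. -/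
noncomputable def empRademacher {Z : Type*} (G : Finset (Z → ℝ)) (hG : G.Nonempty)
    {n : ℕ} (w : Fin n → Z) : ℝ :=
  (1 / 2 ^ n) *
    ∑ σ : Fin n → Bool,
      G.sup' hG fun g => (1 / (n : ℝ)) * ∑ i, (if σ i then (1 : ℝ) else -1) * g (w i)

open Function

theorem Fintype.sum_comp_arrow_of_injective {α β R M : Type*} [Fintype α] [Fintype β]
    [Fintype R] [DecidableEq α] [DecidableEq β] [AddCommMonoid M] {f : β → α}
    (hf : Injective f) (F : (β → R) → M) :
    ∑ σ : α → R, F (σ ∘ f) = Fintype.card R ^ (Fintype.card α - Fintype.card β) • ∑ τ, F τ := by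
  classical
  set s := Set.range f
  let split : (α → R) ≃ (s → R) × (↥sᶜ → R) :=
    ((Equiv.Set.sumCompl s).arrowCongr (Equiv.refl R)).symm.trans
      (Equiv.sumArrowEquivProdArrow _ _ _)
  let onRange : (s → R) ≃ (β → R) := ((Equiv.ofInjective f hf).arrowCongr (Equiv.refl R)).symm
  have hsplit : ∀ σ : α → R, σ ∘ f = onRange (split σ).1 := fun σ => by
    ext b; simp [split, onRange, Equiv.arrowCongr]
  have hcard : Fintype.card (↥sᶜ → R) = Fintype.card R ^ (Fintype.card α - Fintype.card β) := by
    rw [Fintype.card_fun, Fintype.card_compl_set, Set.card_range_of_injective hf]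
  calc ∑ σ : α → R, F (σ ∘ f) = ∑ p : (s → R) × (↥sᶜ → R), F (onRange p.1) := by
        simp_rw [hsplit]; exact split.sum_comp fun p => F (onRange p.1)
    _ = Fintype.card (↥sᶜ → R) • ∑ a : s → R, F (onRange a) := by
        rw [Fintype.sum_prod_type, Finset.smul_sum]; simp
    _ = _ := by rw [hcard, onRange.sum_comp]

theorem average_bool_comp_of_injective {α β : Type*} [Fintype α] [Fintype β]
    [DecidableEq α] [DecidableEq β] {f : β → α} (hf : Injective f) (F : (β → Bool) → ℝ) :
    (1 / 2 ^ Fintype.card α : ℝ) * ∑ σ : α → Bool, F (σ ∘ f) =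
      (1 / 2 ^ Fintype.card β : ℝ) * ∑ τ, F τ := by
  rw [Fintype.sum_comp_arrow_of_injective hf, nsmul_eq_mul, Fintype.card_bool, Nat.cast_pow,
    Nat.cast_ofNat, pow_sub₀ _ two_ne_zero (Fintype.card_le_of_injective f hf)]
  field_simp

noncomputable def maxCorrelation {Z : Type*} (G : Finset (Z → ℝ)) (hG : G.Nonempty)
    {n : ℕ} (w : Fin n → Z) (σ : Fin n → Bool) : ℝ :=
  G.sup' hG fun g => (1 / (n : ℝ)) * ∑ i, (if σ i then (1 : ℝ) else -1) * g (w i)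

theorem empRademacher_eq_average_maxCorrelation {Z : Type*} (G : Finset (Z → ℝ))
    (hG : G.Nonempty) {n : ℕ} (w : Fin n → Z) :
    empRademacher G hG w = (1 / 2 ^ n) * ∑ σ, maxCorrelation G hG w σ :=
  rfl

theorem natCast_div_mul_one_div_mul_sum (n : ℕ) (c : ℝ) (a : Fin n → ℝ) :
    (n / c) * ((1 / n) * ∑ j, a j) = (1 / c) * ∑ j, a j := by
  rcases n with _ | n
  · simp
  · field_simp

theorem maxCorrelation_le_weighted_sum {Z ι : Type*} [Fintype ι] (G : Finset (Z → ℝ))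
    (hG : G.Nonempty) {N : ι → ℕ} {z : (y : ι) → Fin (N y) → Z}
    {e : (Σ y, Fin (N y)) ≃ Fin (∑ y, N y)} {S : Fin (∑ y, N y) → Z}
    (hS : ∀ q : Σ y, Fin (N y), S (e q) = z q.1 q.2) (σ : Fin (∑ y, N y) → Bool) :
    maxCorrelation G hG S σ ≤
      ∑ y, ((N y : ℝ) / ((∑ y', N y' : ℕ) : ℝ)) *
        maxCorrelation G hG (z y) (fun j => σ (e ⟨y, j⟩)) := by
  refine Finset.sup'_le hG _ fun g hg => ?_
  have hblocks : ∑ i, (if σ i then (1 : ℝ) else -1) * g (S i) =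
      ∑ y, ∑ j, (if σ (e ⟨y, j⟩) then (1 : ℝ) else -1) * g (z y j) := by
    rw [← e.sum_comp, Fintype.sum_sigma]
    simp only [hS]
  rw [hblocks, Finset.mul_sum]
  refine Finset.sum_le_sum fun y _ => ?_
  rw [← natCast_div_mul_one_div_mul_sum]
  gcongr
  exact Finset.le_sup' (fun g => (1 / (N y : ℝ)) *
    ∑ j, (if σ (e ⟨y, j⟩) then (1 : ℝ) else -1) * g (z y j)) hg

theorem empRademacher_le_weighted_sum_general {Z : Type*}
    (G : Finset (Z → ℝ)) (hG : G.Nonempty)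
    (C : ℕ) (N : Fin C → ℕ)
    (z : (y : Fin C) → Fin (N y) → Z)
    (e : (Σ y : Fin C, Fin (N y)) ≃ Fin (∑ y, N y))
    (S : Fin (∑ y, N y) → Z)
    (hS : ∀ q : Σ y : Fin C, Fin (N y), S (e q) = z q.1 q.2) :
    empRademacher G hG S ≤
      ∑ y, ((N y : ℝ) / ((∑ y', N y' : ℕ) : ℝ)) * empRademacher G hG (z y) := by
  have hblock : ∀ y, Injective fun j : Fin (N y) => e ⟨y, j⟩ :=
    fun y => e.injective.comp sigma_mk_injective
  calc empRademacher G hG S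
      ≤ (1 / 2 ^ (∑ y, N y)) * ∑ σ, ∑ y, ((N y : ℝ) / ((∑ y', N y' : ℕ) : ℝ)) *
          maxCorrelation G hG (z y) (σ ∘ fun j => e ⟨y, j⟩) := by
        rw [empRademacher_eq_average_maxCorrelation]
        gcongr with σ
        exact maxCorrelation_le_weighted_sum G hG hS σ
    _ = ∑ y, ((N y : ℝ) / ((∑ y', N y' : ℕ) : ℝ)) * empRademacher G hG (z y) := by
        rw [Finset.sum_comm, Finset.mul_sum]
        refine Finset.sum_congr rfl fun y _ => ?_
        have h := average_bool_comp_of_injective (hblock y) (maxCorrelation G hG (z y))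
        rw [Fintype.card_fin, Fintype.card_fin] at h
        rw [← Finset.mul_sum, mul_left_comm, h, empRademacher_eq_average_maxCorrelation]

/-- **Sub-additivity of empirical Rademacher complexity over classes.**
If `S : Fin N → Z` (with `N = ∑ y, N y`) is the concatenation of the per-class samples
`z y : Fin (N y) → Z` (expressed via a bijection `e` between the disjoint union of the
class indices and `Fin N`), then the empirical Rademacher complexity of `G` on `S` is
at most the `N y / N`-weighted sum of the per-class complexities. -/
theorem empRademacher_le_weighted_sum {Z : Type*}
    (G : Finset (Z → ℝ)) (hG : G.Nonempty)
    (C : ℕ) (hC : 1 ≤ C) (N : Fin C → ℕ) (hN : ∀ y, 1 ≤ N y)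
    (z : (y : Fin C) → Fin (N y) → Z)
    (e : (Σ y : Fin C, Fin (N y)) ≃ Fin (∑ y, N y))
    (S : Fin (∑ y, N y) → Z)
    (hS : ∀ q : Σ y : Fin C, Fin (N y), S (e q) = z q.1 q.2) :
    empRademacher G hG S ≤
      ∑ y, ((N y : ℝ) / ((∑ y', N y' : ℕ) : ℝ)) * empRademacher G hG (z y) :=
  empRademacher_le_weighted_sum_general G hG C N z e S hS
end

section
/- Let C ≥ 2 and let π_1,…,π_C be reals with 0 < π_y < 1 for every y, and let p = min_y π_y. Define h_1 : ℝ → ℝ by h_1(κ) = p^{−κ} · Σ_{y=1}^C π_y^{−1/2} − p^{−1} · Σ_{y=1}^C π_y^{1/2 − κ}. Then h_1 is monotone nondecreasing on the interval [1, ∞). -/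
open Finset

/-- For `x ≥ y ≥ 1` and `0 ≤ s ≤ t`, `y^t - y^s ≤ x^t - x^s`. -/
lemma rpow_sub_rpow_mono {x y s t : ℝ} (hy : 1 ≤ y) (hxy : y ≤ x)
    (hs : 0 ≤ s) (hst : s ≤ t) :
    y ^ t - y ^ s ≤ x ^ t - x ^ s := by
  have hy0 : 0 ≤ y := le_trans zero_le_one hy
  have hx1 : 1 ≤ x := le_trans hy hxy
  have hx0 : 0 ≤ x := le_trans zero_le_one hx1
  have hxt : x ^ t = x ^ s * x ^ (t - s) := by
    rw [← Real.rpow_add (lt_of_lt_of_le one_pos hx1)]; ring_nf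
  have hyt : y ^ t = y ^ s * y ^ (t - s) := by
    rw [← Real.rpow_add (lt_of_lt_of_le one_pos hy)]; ring_nf
  rw [hxt, hyt, ← mul_sub_one, ← mul_sub_one]
  have h1 : y ^ s ≤ x ^ s := Real.rpow_le_rpow hy0 hxy hs
  have h2 : y ^ (t - s) - 1 ≤ x ^ (t - s) - 1 := by
    have := Real.rpow_le_rpow hy0 hxy (sub_nonneg.mpr hst); linarith
  have h3 : 0 ≤ y ^ (t - s) - 1 := by
    have := Real.one_le_rpow hy (sub_nonneg.mpr hst); linarith
  have h4 : 0 ≤ y ^ s := Real.rpow_nonneg hy0 s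
  exact mul_le_mul h1 h2 h3 (Real.rpow_nonneg hx0 s) |>.trans_eq rfl |> (fun h => by
    calc y ^ s * (y ^ (t - s) - 1) ≤ x ^ s * (y ^ (t - s) - 1) :=
          mul_le_mul_of_nonneg_right h1 h3
      _ ≤ x ^ s * (x ^ (t - s) - 1) :=
          mul_le_mul_of_nonneg_left h2 (Real.rpow_nonneg hx0 s))

/-- **Monotonicity of the bound gap (Proposition 2, proof).** For class proportions
`π y ∈ (0,1)` with minimum `p`, the gap
`h₁ κ = p^(-κ) ∑ y, π y ^ (-1/2) - p⁻¹ ∑ y, π y ^ (1/2 - κ)`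
between the union bound and the data-dependent bound is monotone nondecreasing
on `[1, ∞)`. -/
theorem bound_gap_monotoneOn
    (C : ℕ) (hC : 2 ≤ C) (π : Fin C → ℝ) (hπ : ∀ y, 0 < π y ∧ π y < 1)
    (p : ℝ) (hp : IsLeast (Set.range π) p) :
    MonotoneOn
      (fun κ : ℝ =>
        p ^ (-κ) * ∑ y, π y ^ (-(1 / 2) : ℝ) - p⁻¹ * ∑ y, π y ^ ((1 : ℝ) / 2 - κ))
      (Set.Ici (1 : ℝ)) := by
  obtain ⟨y₀, hy₀⟩ := hp.1
  have hp0 : 0 < p := hy₀ ▸ (hπ y₀).1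
  have hple : ∀ y, p ≤ π y := fun y => hp.2 ⟨y, rfl⟩
  intro a ha b hb hab
  simp only [Set.mem_Ici] at ha hb
  -- rewrite both sides as a sum over y
  have key : ∀ κ : ℝ,
      p ^ (-κ) * ∑ y, π y ^ (-(1 / 2) : ℝ) - p⁻¹ * ∑ y, π y ^ ((1 : ℝ) / 2 - κ)
      = ∑ y, (π y ^ (-(1 / 2) : ℝ) * p⁻¹ * (p ^ (1 - κ) - π y ^ (1 - κ))) := by
    intro κ
    rw [Finset.mul_sum, Finset.mul_sum, ← Finset.sum_sub_distrib]
    refine Finset.sum_congr rfl fun y _ => ?_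
    have hπ0 : 0 < π y := (hπ y).1
    have h1 : p ^ (-κ) = p⁻¹ * p ^ (1 - κ) := by
      rw [← Real.rpow_neg_one p, ← Real.rpow_add hp0]; ring_nf
    have h2 : π y ^ ((1 : ℝ) / 2 - κ) = π y ^ (-(1 / 2) : ℝ) * π y ^ (1 - κ) := by
      rw [← Real.rpow_add hπ0]; ring_nf
    rw [h1, h2]; ring
  dsimp only
  rw [key a, key b]
  refine Finset.sum_le_sum fun y _ => ?_
  have hπ0 : 0 < π y := (hπ y).1
  have hπ1 : π y < 1 := (hπ y).2
  have hc : 0 ≤ π y ^ (-(1 / 2) : ℝ) * p⁻¹ :=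
    mul_nonneg (Real.rpow_nonneg hπ0.le _) (inv_nonneg.mpr hp0.le)
  refine mul_le_mul_of_nonneg_left ?_ hc
  -- p^(1-a) - π^(1-a) ≤ p^(1-b) - π^(1-b)
  have hpπ : p ≤ π y := hple y
  have hx1 : 1 ≤ (π y)⁻¹ := (one_le_inv_iff₀.mpr ⟨hπ0, hπ1.le⟩)
  have hxy : (π y)⁻¹ ≤ p⁻¹ := by
    apply inv_anti₀ hp0 hpπ
  have h1 : ∀ κ : ℝ, p ^ (1 - κ) = (p⁻¹) ^ (κ - 1) := fun κ => by
    rw [show (1 - κ) = (-1) * (κ - 1) by ring, Real.rpow_mul hp0.le,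
      Real.rpow_neg_one]
  have h2 : ∀ κ : ℝ, π y ^ (1 - κ) = ((π y)⁻¹) ^ (κ - 1) := fun κ => by
    rw [show (1 - κ) = (-1) * (κ - 1) by ring, Real.rpow_mul hπ0.le,
      Real.rpow_neg_one]
  rw [h1 a, h1 b, h2 a, h2 b]
  have := rpow_sub_rpow_mono (x := p⁻¹) (y := (π y)⁻¹) hx1 hxy
    (by linarith : (0:ℝ) ≤ a - 1) (by linarith : a - 1 ≤ b - 1)
  linarith
end

section
/- Let C ≥ 1, y ∈ {1,…,C}, α ≥ 0, Δ ∈ ℝ^C, and β ∈ ℝ^C with β_j ≥ 0 for all j. Define L : ℝ^C → ℝ by L(s) = α · ln( 1 + Σ_{j ≠ y} exp(β_j s_j − β_y s_y + Δ_j − Δ_y) ), and define p_y(s) = exp(β_y s_y + Δ_y) / Σ_{k=1}^C exp(β_k s_k + Δ_k). Then for every s ∈ ℝ^C, the Euclidean norm of the gradient of L at s satisfies ‖∇L(s)‖₂ ≤ α · √( β_y² + (Σ_{j ≠ y} β_j)² ) · (1 − p_y(s)). -/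
/-!
Writing `eⱼ = exp(βⱼ sⱼ - β_y s_y + Δⱼ - Δ_y)` and `T = ∑_{j ≠ y} eⱼ`, the loss is
`α log(1 + T)` and its gradient is `α/(1 + T) · ∑_{j ≠ y} eⱼ (βⱼ 𝐞ⱼ - β_y 𝐞_y)` (standard basis
vectors `𝐞ⱼ`), while `1 - p_y(s) = T/(1 + T)`. The gradient splits into the orthogonal pieces
`∑_{j ≠ y} eⱼ βⱼ 𝐞ⱼ`, of norm at most `∑ eⱼ βⱼ ≤ T ∑_{j ≠ y} βⱼ`, and `-T β_y 𝐞_y`;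
Pythagoras gives the bound.
-/

open Finset

section Gradient

variable {E : Type*} [NormedAddCommGroup E] [InnerProductSpace ℝ E] [CompleteSpace E]

theorem HasGradientAt.const_mul {f : E → ℝ} {f' x : E} (hf : HasGradientAt f f' x) (c : ℝ) :
    HasGradientAt (fun x => c * f x) (c • f') x := by
  rw [hasGradientAt_iff_hasFDerivAt, map_smul]
  exact hf.hasFDerivAt.const_mul c

theorem hasGradientAt_log_one_add_sum_exp_inner {ι : Type*} (t : Finset ι) (a : ι → E)
    (c : ι → ℝ) (x : E) :
    HasGradientAt (fun x => Real.log (1 + ∑ j ∈ t, Real.exp (inner ℝ (a j) x + c j)))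
      ((1 + ∑ j ∈ t, Real.exp (inner ℝ (a j) x + c j))⁻¹ •
        ∑ j ∈ t, Real.exp (inner ℝ (a j) x + c j) • a j) x := by
  have hsum := HasFDerivAt.fun_sum (u := t) fun j _ =>
    (((innerSL ℝ (a j)).hasFDerivAt (x := x)).add_const (c j)).exp
  simp only [innerSL_apply_apply] at hsum
  rw [hasGradientAt_iff_hasFDerivAt]
  refine ((hsum.const_add 1).log (by positivity)).congr_fderiv ?_
  ext v
  simp [InnerProductSpace.toDual_apply_apply]

end Gradient

section Euclidean

variable {ι : Type*} [Fintype ι] [DecidableEq ι]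

theorem one_sub_exp_div_sum_exp (z : ι → ℝ) (y : ι) :
    1 - Real.exp (z y) / ∑ k, Real.exp (z k) =
      (∑ j ∈ univ.erase y, Real.exp (z j - z y)) /
        (1 + ∑ j ∈ univ.erase y, Real.exp (z j - z y)) := by
  have hsum : ∑ k, Real.exp (z k) =
      Real.exp (z y) * (1 + ∑ j ∈ univ.erase y, Real.exp (z j - z y)) := by
    simp only [mul_add, mul_one, mul_sum, ← Real.exp_add, add_sub_cancel]
    exact (add_sum_erase _ _ (mem_univ y)).symm
  have hpos : 0 < 1 + ∑ j ∈ univ.erase y, Real.exp (z j - z y) := by positivity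
  rw [hsum]
  field_simp
  ring

theorem norm_sum_smul_single_sub_single_le {t : Finset ι} {y : ι} (hy : y ∉ t)
    {w β : ι → ℝ} (hw : ∀ j ∈ t, 0 ≤ w j) (hβ : ∀ j ∈ t, 0 ≤ β j) :
    ‖∑ j ∈ t, w j • (EuclideanSpace.single j (β j) - EuclideanSpace.single y (β y))‖ ≤
      √(β y ^ 2 + (∑ j ∈ t, β j) ^ 2) * ∑ j ∈ t, w j := by
  set u : EuclideanSpace ℝ ι := ∑ j ∈ t, w j • EuclideanSpace.single j (β j)
  set W := ∑ j ∈ t, w j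
  have hW : 0 ≤ W := sum_nonneg hw
  have hsplit :
      ∑ j ∈ t, w j • (EuclideanSpace.single j (β j) - EuclideanSpace.single y (β y)) =
        u - W • EuclideanSpace.single y (β y) := by
    simp only [u, W, smul_sub, sum_sub_distrib, sum_smul]
  have horth : inner ℝ u (W • EuclideanSpace.single y (β y)) = 0 := by
    rw [real_inner_smul_right, sum_inner]
    refine mul_eq_zero_of_right _ (sum_eq_zero fun j hj => ?_)
    rw [real_inner_smul_left, EuclideanSpace.inner_single_left, PiLp.single_apply,
      if_neg (ne_of_mem_of_not_mem hj hy), mul_zero, mul_zero]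
  have hu : ‖u‖ ≤ W * ∑ j ∈ t, β j := by
    calc ‖u‖ ≤ ∑ j ∈ t, w j * β j := by
          refine (norm_sum_le _ _).trans_eq (sum_congr rfl fun j hj => ?_)
          rw [norm_smul, PiLp.norm_single, Real.norm_of_nonneg (hw j hj),
            Real.norm_of_nonneg (hβ j hj)]
      _ ≤ ∑ j ∈ t, w j * ∑ k ∈ t, β k := by
          gcongr with j hj
          · exact hw j hj
          · exact single_le_sum hβ hj
      _ = W * ∑ j ∈ t, β j := (sum_mul _ _ _).symm
  refine le_of_pow_le_pow_left₀ two_ne_zero (by positivity) ?_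
  rw [hsplit, sq, norm_sub_sq_eq_norm_sq_add_norm_sq_real horth, norm_smul, PiLp.norm_single,
    Real.norm_of_nonneg hW, Real.norm_eq_abs, mul_pow, Real.sq_sqrt (by positivity)]
  nlinarith [pow_le_pow_left₀ (norm_nonneg u) hu 2, sq_abs (β y)]

end Euclidean

theorem vs_loss_gradient_norm_le_general (C : ℕ) (y : Fin C)
    (α : ℝ) (hα : 0 ≤ α) (β Δ : Fin C → ℝ) (hβ : ∀ j, 0 ≤ β j) :
    ∀ s : EuclideanSpace ℝ (Fin C),
      ‖gradient
          (fun s : EuclideanSpace ℝ (Fin C) =>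
            α * Real.log
              (1 + ∑ j ∈ Finset.univ.erase y,
                Real.exp (β j * s j - β y * s y + Δ j - Δ y))) s‖ ≤
        α * Real.sqrt (β y ^ 2 + (∑ j ∈ Finset.univ.erase y, β j) ^ 2) *
          (1 - Real.exp (β y * s y + Δ y) / ∑ k, Real.exp (β k * s k + Δ k)) := by
  intro s
  set a : Fin C → EuclideanSpace ℝ (Fin C) := fun j =>
    EuclideanSpace.single j (β j) - EuclideanSpace.single y (β y)
  have hexp (j : Fin C) (x : EuclideanSpace ℝ (Fin C)) :
      inner ℝ (a j) x + (Δ j - Δ y) = β j * x j - β y * x y + Δ j - Δ y := by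
    simp only [a, inner_sub_left, EuclideanSpace.inner_single_left, conj_trivial]
    ring
  have hgrad := (hasGradientAt_log_one_add_sum_exp_inner (univ.erase y) a
    (fun j => Δ j - Δ y) s).const_mul α
  simp only [hexp] at hgrad
  have hp := one_sub_exp_div_sum_exp (fun k => β k * s k + Δ k) y
  have hz (j : Fin C) :
      β j * s j + Δ j - (β y * s y + Δ y) = β j * s j - β y * s y + Δ j - Δ y := by
    ring
  simp only [hz] at hp
  set T := ∑ j ∈ univ.erase y, Real.exp (β j * s j - β y * s y + Δ j - Δ y)
  have hT : 0 < 1 + T := by positivity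
  rw [hgrad.gradient, hp, norm_smul, norm_smul, Real.norm_of_nonneg hα,
    Real.norm_of_nonneg (inv_nonneg.2 hT.le)]
  calc α * ((1 + T)⁻¹ *
          ‖∑ j ∈ univ.erase y, Real.exp (β j * s j - β y * s y + Δ j - Δ y) • a j‖)
      ≤ α * ((1 + T)⁻¹ * (√(β y ^ 2 + (∑ j ∈ univ.erase y, β j) ^ 2) * T)) := by
        gcongr
        exact norm_sum_smul_single_sub_single_le (notMem_erase y univ)
          (fun j _ => (Real.exp_pos _).le) (fun j _ => hβ j)
    _ = _ := by ring

/-- **Gradient norm bound for the VS loss (Lemma 3, proof).** For the VS loss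
`L s = α · ln(1 + ∑_{j ≠ y} exp(β j * s j - β y * s y + Δ j - Δ y))` on the Euclidean
space `ℝ^C`, with `α ≥ 0` and `β j ≥ 0`, the Euclidean norm of the gradient at any `s`
is at most `α · √(β y ^ 2 + (∑_{j ≠ y} β j) ^ 2) · (1 - p y s)`, where
`p y s = exp(β y * s y + Δ y) / ∑ k, exp(β k * s k + Δ k)`. -/
theorem vs_loss_gradient_norm_le (C : ℕ) (hC : 1 ≤ C) (y : Fin C)
    (α : ℝ) (hα : 0 ≤ α) (β Δ : Fin C → ℝ) (hβ : ∀ j, 0 ≤ β j) :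
    ∀ s : EuclideanSpace ℝ (Fin C),
      ‖gradient
          (fun s : EuclideanSpace ℝ (Fin C) =>
            α * Real.log
              (1 + ∑ j ∈ Finset.univ.erase y,
                Real.exp (β j * s j - β y * s y + Δ j - Δ y))) s‖ ≤
        α * Real.sqrt (β y ^ 2 + (∑ j ∈ Finset.univ.erase y, β j) ^ 2) *
          (1 - Real.exp (β y * s y + Δ y) / ∑ k, Real.exp (β k * s k + Δ k)) :=
  vs_loss_gradient_norm_le_general C y α hα β Δ hβ
end

section
/- Let C ≥ 2, y ∈ {1,…,C}, α ≥ 0, Δ ∈ ℝ^C, and β ∈ ℝ^C with β_j > 0 for all j. Define L : ℝ^C → ℝ by L(s) = α · ln( 1 + Σ_{j ≠ y} exp(β_j s_j − β_y s_y + Δ_j − Δ_y) ). Fix reals B and U, set A = Σ_{j ≠ y} exp(β_j U + Δ_j), and let K = { s ∈ ℝ^C : s_y ≥ B and s_j ≤ U for all j ≠ y }. Then for all s, s′ ∈ K, |L(s) − L(s′)| ≤ α · √( β_y² + (Σ_{j ≠ y} β_j)² ) · ( A / ( exp(β_y B + Δ_y) + A ) ) · ‖s − s′‖₂. -/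
open Finset Real

/-!
Restrict the loss to the segment from `s'` to `s` and apply the mean value inequality. The
derivative of `α · log (1 + T)`, with `T = ∑_{j ≠ y} exp zⱼ`, in a direction `d` is
`α / (1 + T) · ∑_{j ≠ y} exp zⱼ · (βⱼ dⱼ - β_y d_y)`. By Cauchy–Schwarz in the coordinates `j`
and `y`, `|βⱼ dⱼ - β_y d_y| ≤ √(βⱼ² + β_y²) · ‖d‖ ≤ √(β_y² + (∑ β)²) · ‖d‖`, so the
derivative is at most `α · √(β_y² + (∑ β)²) · ‖d‖` times the softmax mass `T / (1 + T)` of the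
wrong classes. On the box, `T ≤ A / exp (β_y B + Δ_y)`, and `x ↦ x / (1 + x)` is increasing.
-/

lemma abs_mul_sub_mul_le_sqrt_mul_sqrt (a b x z : ℝ) :
    |a * x - b * z| ≤ √(a ^ 2 + b ^ 2) * √(x ^ 2 + z ^ 2) := by
  rw [← sqrt_mul (by positivity)]
  exact abs_le_sqrt (by nlinarith [sq_nonneg (a * z + b * x)])

lemma div_one_add_le_div_add {x A c : ℝ} (hx : 0 ≤ x) (hc : 0 < c) (h : x ≤ A / c) :
    x / (1 + x) ≤ A / (c + A) := by
  rw [le_div_iff₀ hc] at h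
  have hA : 0 ≤ A := by nlinarith
  rw [div_le_div_iff₀ (by positivity) (by positivity)]
  nlinarith

namespace VSLoss

variable {ι : Type*}

def box (y : ι) (B U : ℝ) : Set (EuclideanSpace ℝ ι) :=
  {s | B ≤ s y ∧ ∀ j, j ≠ y → s j ≤ U}

lemma convex_box (y : ι) (B U : ℝ) : Convex ℝ (box y B U) := by
  rintro s ⟨hsB, hsU⟩ s' ⟨hs'B, hs'U⟩ a b ha hb hab
  simp only [box, Set.mem_ofPred_eq, PiLp.add_apply, PiLp.smul_apply, smul_eq_mul]
  have hcomb (c : ℝ) : a * c + b * c = c := by rw [← add_mul, hab, one_mul]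
  refine ⟨?_, fun j hj => ?_⟩
  · linarith [hcomb B, mul_le_mul_of_nonneg_left hsB ha, mul_le_mul_of_nonneg_left hs'B hb]
  · linarith [hcomb U, mul_le_mul_of_nonneg_left (hsU j hj) ha,
      mul_le_mul_of_nonneg_left (hs'U j hj) hb]

def logit (β Δ : ι → ℝ) (y : ι) (s : EuclideanSpace ℝ ι) (j : ι) : ℝ :=
  β j * s j - β y * s y + Δ j - Δ y

lemma logit_add_smul {β Δ : ι → ℝ} {y : ι} (s d : EuclideanSpace ℝ ι) (t : ℝ) (j : ι) :
    logit β Δ y (s + t • d) j = logit β Δ y s j + t * (β j * d j - β y * d y) := by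
  simp only [logit, PiLp.add_apply, PiLp.smul_apply, smul_eq_mul]
  ring

variable [Fintype ι] [DecidableEq ι]

lemma sqrt_sq_add_sq_le_norm {i j : ι} (hij : i ≠ j) (v : EuclideanSpace ℝ ι) :
    √(v i ^ 2 + v j ^ 2) ≤ ‖v‖ := by
  rw [EuclideanSpace.norm_eq]
  refine sqrt_le_sqrt ?_
  simp only [norm_eq_abs, sq_abs]
  calc v i ^ 2 + v j ^ 2 = ∑ k ∈ {i, j}, v k ^ 2 := (sum_pair (f := fun k => v k ^ 2) hij).symm
    _ ≤ ∑ k, v k ^ 2 :=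
        sum_le_sum_of_subset_of_nonneg (subset_univ _) fun _ _ _ => sq_nonneg _

lemma abs_sum_mul_sub_le {w β : ι → ℝ} (hw : ∀ j, 0 ≤ w j) (hβ : ∀ j, 0 ≤ β j) (y : ι)
    (d : EuclideanSpace ℝ ι) :
    |∑ j ∈ univ.erase y, w j * (β j * d j - β y * d y)| ≤
      (∑ j ∈ univ.erase y, w j) * √(β y ^ 2 + (∑ j ∈ univ.erase y, β j) ^ 2) * ‖d‖ := by
  rw [sum_mul, sum_mul]
  refine (abs_sum_le_sum_abs _ _).trans (sum_le_sum fun j hj => ?_)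
  rw [abs_mul, abs_of_nonneg (hw j), mul_assoc]
  refine mul_le_mul_of_nonneg_left ?_ (hw j)
  have hβj : β j ≤ ∑ k ∈ univ.erase y, β k := single_le_sum (fun k _ => hβ k) hj
  calc |β j * d j - β y * d y| ≤ √(β j ^ 2 + β y ^ 2) * √(d j ^ 2 + d y ^ 2) :=
        abs_mul_sub_mul_le_sqrt_mul_sqrt _ _ _ _
    _ ≤ √(β y ^ 2 + (∑ k ∈ univ.erase y, β k) ^ 2) * ‖d‖ := by
        refine mul_le_mul (sqrt_le_sqrt ?_) (sqrt_sq_add_sq_le_norm (ne_of_mem_erase hj) d)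
          (sqrt_nonneg _) (sqrt_nonneg _)
        nlinarith [hβ j]

noncomputable def expSum (β Δ : ι → ℝ) (y : ι) (s : EuclideanSpace ℝ ι) : ℝ :=
  ∑ j ∈ univ.erase y, exp (logit β Δ y s j)

noncomputable def vsLoss (α : ℝ) (β Δ : ι → ℝ) (y : ι) (s : EuclideanSpace ℝ ι) : ℝ :=
  α * log (1 + expSum β Δ y s)

lemma hasDerivAt_vsLoss_add_smul (α : ℝ) (β Δ : ι → ℝ) (y : ι) (s d : EuclideanSpace ℝ ι)
    (t : ℝ) :
    HasDerivAt (fun t : ℝ => vsLoss α β Δ y (s + t • d))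
      (α * ((∑ j ∈ univ.erase y,
          exp (logit β Δ y (s + t • d) j) * (β j * d j - β y * d y)) /
        (1 + expSum β Δ y (s + t • d)))) t := by
  simp only [vsLoss, expSum, logit_add_smul]
  have hsum := HasDerivAt.fun_sum (u := univ.erase y) fun j _ =>
    (((hasDerivAt_id t).mul_const (β j * d j - β y * d y)).const_add (logit β Δ y s j)).exp
  simp only [id, one_mul] at hsum
  exact ((hsum.const_add 1).log (by positivity)).const_mul α

variable {β Δ : ι → ℝ} {y : ι}

lemma expSum_nonneg (s : EuclideanSpace ℝ ι) : 0 ≤ expSum β Δ y s :=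
  sum_nonneg fun _ _ => (exp_pos _).le

lemma expSum_le_of_mem_box (hβ : ∀ j, 0 ≤ β j) {B U : ℝ} {s : EuclideanSpace ℝ ι}
    (hs : s ∈ box y B U) :
    expSum β Δ y s ≤
      (∑ j ∈ univ.erase y, exp (β j * U + Δ j)) / exp (β y * B + Δ y) := by
  rw [expSum, sum_div]
  refine sum_le_sum fun j hj => ?_
  rw [← exp_sub, exp_le_exp, logit]
  have hU := mul_le_mul_of_nonneg_left (hs.2 j (ne_of_mem_erase hj)) (hβ j)
  have hB := mul_le_mul_of_nonneg_left hs.1 (hβ y)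
  linarith

lemma abs_deriv_vsLoss_le {α : ℝ} (hα : 0 ≤ α) (hβ : ∀ j, 0 ≤ β j) {B U : ℝ}
    {p : EuclideanSpace ℝ ι} (hp : p ∈ box y B U) (d : EuclideanSpace ℝ ι) :
    |α * ((∑ j ∈ univ.erase y, exp (logit β Δ y p j) * (β j * d j - β y * d y)) /
        (1 + expSum β Δ y p))| ≤
      α * √(β y ^ 2 + (∑ j ∈ univ.erase y, β j) ^ 2) *
        ((∑ j ∈ univ.erase y, exp (β j * U + Δ j)) /
          (exp (β y * B + Δ y) + ∑ j ∈ univ.erase y, exp (β j * U + Δ j))) * ‖d‖ := by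
  set T := expSum β Δ y p
  set K := √(β y ^ 2 + (∑ j ∈ univ.erase y, β j) ^ 2)
  have hT : 0 ≤ T := expSum_nonneg p
  have hnum : |∑ j ∈ univ.erase y, exp (logit β Δ y p j) * (β j * d j - β y * d y)| ≤
      T * K * ‖d‖ :=
    abs_sum_mul_sub_le (fun _ => (exp_pos _).le) hβ y d
  have hmass := div_one_add_le_div_add hT (exp_pos _) (expSum_le_of_mem_box hβ hp)
  rw [abs_mul, abs_of_nonneg hα, abs_div, abs_of_pos (a := 1 + T) (by linarith)]
  calc α * (|∑ j ∈ univ.erase y, exp (logit β Δ y p j) * (β j * d j - β y * d y)| / (1 + T))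
      ≤ α * (T * K * ‖d‖ / (1 + T)) := by gcongr
    _ = α * K * (T / (1 + T)) * ‖d‖ := by ring
    _ ≤ _ := by gcongr

end VSLoss

open VSLoss in
theorem vs_loss_locally_lipschitz_general (C : ℕ) (y : Fin C)
    (α : ℝ) (hα : 0 ≤ α) (Δ β : Fin C → ℝ) (hβ : ∀ j, 0 < β j) (B U : ℝ) :
    ∀ s s' : EuclideanSpace ℝ (Fin C),
      (B ≤ s y ∧ ∀ j, j ≠ y → s j ≤ U) →
      (B ≤ s' y ∧ ∀ j, j ≠ y → s' j ≤ U) →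
      |α * Real.log
          (1 + ∑ j ∈ Finset.univ.erase y,
            Real.exp (β j * s j - β y * s y + Δ j - Δ y)) -
        α * Real.log
          (1 + ∑ j ∈ Finset.univ.erase y,
            Real.exp (β j * s' j - β y * s' y + Δ j - Δ y))| ≤
        α * Real.sqrt (β y ^ 2 + (∑ j ∈ Finset.univ.erase y, β j) ^ 2) *
          ((∑ j ∈ Finset.univ.erase y, Real.exp (β j * U + Δ j)) /
            (Real.exp (β y * B + Δ y) +
              ∑ j ∈ Finset.univ.erase y, Real.exp (β j * U + Δ j))) *
          ‖s - s'‖ := by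
  intro s s' hs hs'
  have hβ' : ∀ j, 0 ≤ β j := fun j => (hβ j).le
  have hsegment := norm_image_sub_le_of_norm_deriv_le_segment_01'
    (fun t _ => (hasDerivAt_vsLoss_add_smul α β Δ y s' (s - s') t).hasDerivWithinAt)
    (fun t ht => abs_deriv_vsLoss_le hα hβ'
      ((convex_box y B U).add_smul_sub_mem hs' hs (Set.Ico_subset_Icc_self ht)) (s - s'))
  simp only [one_smul, zero_smul, add_sub_cancel, add_zero, norm_eq_abs] at hsegment
  exact hsegment

/-- **Local Lipschitz continuity of the VS loss (Lemma 3).** With `α ≥ 0`, `β j > 0`,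
`A = ∑_{j ≠ y} exp(β j * U + Δ j)`, and the VS loss
`L s = α · ln(1 + ∑_{j ≠ y} exp(β j * s j - β y * s y + Δ j - Δ y))` on Euclidean `ℝ^C`,
for any `s, s'` in the box `{s : s y ≥ B, s j ≤ U ∀ j ≠ y}` one has
`|L s - L s'| ≤ α · √(β y ^ 2 + (∑_{j ≠ y} β j) ^ 2) · (A / (exp(β y * B + Δ y) + A)) · ‖s - s'‖₂`. -/
theorem vs_loss_locally_lipschitz (C : ℕ) (hC : 2 ≤ C) (y : Fin C)
    (α : ℝ) (hα : 0 ≤ α) (Δ β : Fin C → ℝ) (hβ : ∀ j, 0 < β j) (B U : ℝ) :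
    ∀ s s' : EuclideanSpace ℝ (Fin C),
      (B ≤ s y ∧ ∀ j, j ≠ y → s j ≤ U) →
      (B ≤ s' y ∧ ∀ j, j ≠ y → s' j ≤ U) →
      |α * Real.log
          (1 + ∑ j ∈ Finset.univ.erase y,
            Real.exp (β j * s j - β y * s y + Δ j - Δ y)) -
        α * Real.log
          (1 + ∑ j ∈ Finset.univ.erase y,
            Real.exp (β j * s' j - β y * s' y + Δ j - Δ y))| ≤
        α * Real.sqrt (β y ^ 2 + (∑ j ∈ Finset.univ.erase y, β j) ^ 2) *
          ((∑ j ∈ Finset.univ.erase y, Real.exp (β j * U + Δ j)) /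
            (Real.exp (β y * B + Δ y) +
              ∑ j ∈ Finset.univ.erase y, Real.exp (β j * U + Δ j))) *
          ‖s - s'‖ :=
  vs_loss_locally_lipschitz_general C y α hα Δ β hβ B U
end
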